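/- Let Â be the completion of a graded associative ℚ-algebra A = ⊕ₙ≥0 Aₙ with A₀ = ℚ, and let (ζ_k)_{k≥1} be elements with ζ_k ∈ A_k. Define P := (exp(ζ₁)exp(ζ₂)exp(ζ₃)⋯)·(⋯exp(ζ₃)exp(ζ₂)exp(ζ₁)) ∈ Â. Suppose the substitution a ↦ (−1)^{deg a}·a (extended to Â) sends P to P^{−1}. Then ζ_{2m} = 0 for all m ≥ 1. -/

import Mathlib

/- The completion `Â` of a graded associative ℚ-algebra with `A₀ = ℚ` is
modeled as power series over a ℚ-algebra `R`, the variable `t` recording the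
degree; a homogeneous element of degree `k` is `c · tᵏ` with `c : R`. -/

/-- The formal exponential `exp (c · tᵏ) = ∑ⱼ cʲ tᵏʲ / j!` (for `k ≥ 1`). -/
noncomputable def expPow {R : Type*} [Ring R] [Algebra ℚ R] (k : ℕ) (c : R) :
    PowerSeries R :=
  PowerSeries.mk fun m =>
    if k ∣ m then (algebraMap ℚ R (((m / k).factorial : ℚ)⁻¹)) * c ^ (m / k) else 0

/-- Partial ordered product `exp(ζ₁ t) exp(ζ₂ t²) ⋯ exp(ζ_N t^N)` (increasing). -/
noncomputable def zassUp {R : Type*} [Ring R] [Algebra ℚ R] (ζ : ℕ → R) (N : ℕ) :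
    PowerSeries R :=
  ((List.range N).map (fun k => expPow (k + 1) (ζ (k + 1)))).prod

/-- Partial ordered product `exp(ζ_N t^N) ⋯ exp(ζ₂ t²) exp(ζ₁ t)` (decreasing). -/
noncomputable def zassDown {R : Type*} [Ring R] [Algebra ℚ R] (ζ : ℕ → R) (N : ℕ) :
    PowerSeries R :=
  (((List.range N).reverse).map (fun k => expPow (k + 1) (ζ (k + 1)))).prod

/-- The sign involution `a ↦ (-1)^{deg a} a`, i.e. `t ↦ -t`. -/
noncomputable def negSub {R : Type*} [Ring R] (f : PowerSeries R) : PowerSeries R :=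
  PowerSeries.mk fun n => (-1 : R) ^ n * PowerSeries.coeff n f

/-! By induction on `N ≥ 1`, the sums `(-1)ᴺ ζ_N + ζ_N` all vanish, which for even `N`
says `2 ζ_N = 0`. Suppose they vanish below `N` and write `U_N, D_N` for the partial products and
`U'_N, D'_N` for their images under `t ↦ -t`. Modulo `t^{N+1}` the hypothesis reads
`U'_N D'_N U_N D_N ≡ 1`. In the middle, `D'_N U_N` telescopes to `exp(a tᴺ)` with
`a = (-1)ᴺ ζ_N + ζ_N`, so `exp(a tᴺ) ≡ (U'_N)⁻¹ (D_N)⁻¹`, and the same telescoping shows that the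
right-hand side is `exp(-a tᴺ)`. Comparing coefficients of `tᴺ` gives `a = -a`, i.e. `a = 0`. -/

open PowerSeries

theorem eq_zero_of_add_self_eq_zero {M : Type*} [AddCommGroup M] [Module ℚ M] {x : M}
    (h : x + x = 0) : x = 0 := by
  rw [← two_smul ℚ, smul_eq_zero] at h
  exact h.resolve_left two_ne_zero

theorem coeff_mul_eq_coeff_mul_of_le {R : Type*} [Semiring R] {N : ℕ} {f f' g g' : PowerSeries R}
    (hf : ∀ n ≤ N, coeff n f = coeff n f') (hg : ∀ n ≤ N, coeff n g = coeff n g')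
    {n : ℕ} (hn : n ≤ N) : coeff n (f * g) = coeff n (f' * g') := by
  simp only [coeff_mul]
  refine Finset.sum_congr rfl fun p hp => ?_
  have hsum := Finset.HasAntidiagonal.mem_antidiagonal.mp hp
  rw [hf p.1 (by omega), hg p.2 (by omega)]

section ExpPow

variable {R : Type*} [Ring R] [Algebra ℚ R]

theorem expPow_zero {k : ℕ} (hk : k ≠ 0) : expPow k (0 : R) = 1 := by
  ext n
  rcases eq_or_ne n 0 with rfl | hn
  · simp [expPow]
  · obtain ⟨q, rfl⟩ | hdvd := em (k ∣ n)
    · have hq : q ≠ 0 := by rintro rfl; simp at hn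
      simp [expPow, hn, hq, Nat.mul_div_cancel_left _ (Nat.pos_of_ne_zero hk)]
    · simp [expPow, hn, hdvd]

theorem coeff_expPow_self {k : ℕ} (hk : k ≠ 0) (c : R) : coeff k (expPow k c) = c := by
  simp [expPow, Nat.div_self (Nat.pos_of_ne_zero hk)]

theorem map_expPow {S : Type*} [Ring S] [Algebra ℚ S] (f : R →+* S) (k : ℕ) (c : R) :
    map f (expPow k c) = expPow k (f c) := by
  ext n
  simp only [expPow, coeff_map, coeff_mk]
  split_ifs <;> simp

theorem expPow_eq_expand {S : Type*} [CommRing S] [Algebra ℚ S] {k : ℕ} (hk : k ≠ 0) (c : S) :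
    expPow k c = expand k hk (rescale c (exp S)) := by
  ext n
  simp only [expPow, coeff_mk, coeff_expand, coeff_rescale, coeff_exp, one_div]
  split_ifs <;> ring

open scoped IsMulCommutative in
/-- Reduced to the commutative case inside the subalgebra generated by `c` and `d`. -/
theorem expPow_add {k : ℕ} (hk : k ≠ 0) {c d : R} (h : Commute c d) :
    expPow k (c + d) = expPow k c * expPow k d := by
  let S := Algebra.adjoin ℚ {c, d}
  have : IsMulCommutative S := Algebra.isMulCommutative_adjoin ℚ (by
    simp only [Set.mem_insert_iff, Set.mem_singleton_iff]
    rintro x (rfl | rfl) y (rfl | rfl)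
    exacts [rfl, h.eq, h.eq.symm, rfl])
  let c' : S := ⟨c, Algebra.subset_adjoin (by simp)⟩
  let d' : S := ⟨d, Algebra.subset_adjoin (by simp)⟩
  have hS : expPow k (c' + d') = expPow k c' * expPow k d' := by
    simp only [expPow_eq_expand hk, ← map_mul, exp_mul_exp_eq_exp_add]
  simpa [map_expPow] using congrArg (map S.val.toRingHom) hS

end ExpPow

section NegSub

variable {R : Type*} [Ring R]

theorem negSub_one : negSub (1 : PowerSeries R) = 1 := by
  ext n
  rcases eq_or_ne n 0 with rfl | hn <;> simp [negSub, coeff_one, *]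

theorem negSub_mul (f g : PowerSeries R) : negSub (f * g) = negSub f * negSub g := by
  ext n
  simp only [negSub, coeff_mk, coeff_mul, Finset.mul_sum]
  refine Finset.sum_congr rfl fun p hp => ?_
  rw [← Finset.HasAntidiagonal.mem_antidiagonal.mp hp, pow_add, mul_assoc, mul_assoc,
    ((Commute.neg_one_left (coeff p.1 f)).pow_left p.2).left_comm]

theorem negSub_expPow [Algebra ℚ R] (k : ℕ) (c : R) :
    negSub (expPow k c) = expPow k ((-1) ^ k * c) := by
  ext n
  simp only [negSub, expPow, coeff_mk]
  split_ifs with h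
  · obtain ⟨q, rfl⟩ := h
    rw [((Commute.neg_one_left c).pow_left k).mul_pow, ← pow_mul,
      Nat.mul_div_cancel' (dvd_mul_right k q), ← mul_assoc, ← mul_assoc,
      ((Commute.neg_one_left _).pow_left _).eq]
  · rw [mul_zero]

end NegSub

section Telescoping

variable {R : Type*} [Ring R] [Algebra ℚ R]

theorem zassUp_succ (ζ : ℕ → R) (N : ℕ) :
    zassUp ζ (N + 1) = zassUp ζ N * expPow (N + 1) (ζ (N + 1)) := by
  simp [zassUp, List.range_succ]

theorem zassDown_succ (ζ : ℕ → R) (N : ℕ) :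
    zassDown ζ (N + 1) = expPow (N + 1) (ζ (N + 1)) * zassDown ζ N := by
  simp [zassDown, List.range_succ]

theorem negSub_zassUp (ζ : ℕ → R) (N : ℕ) :
    negSub (zassUp ζ N) = zassUp (fun k => (-1) ^ k * ζ k) N := by
  induction N with
  | zero => exact negSub_one
  | succ N ih => rw [zassUp_succ, negSub_mul, ih, negSub_expPow, zassUp_succ]

theorem negSub_zassDown (ζ : ℕ → R) (N : ℕ) :
    negSub (zassDown ζ N) = zassDown (fun k => (-1) ^ k * ζ k) N := by
  induction N with
  | zero => exact negSub_one
  | succ N ih => rw [zassDown_succ, negSub_mul, ih, negSub_expPow, zassDown_succ]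

theorem zassDown_mul_zassUp_eq_one {η θ : ℕ → R} (hcomm : ∀ k, Commute (η k) (θ k)) {N : ℕ}
    (H : ∀ k, 1 ≤ k → k ≤ N → η k + θ k = 0) : zassDown η N * zassUp θ N = 1 := by
  induction N with
  | zero => simp [zassUp, zassDown]
  | succ N ih =>
    rw [zassUp_succ, zassDown_succ, mul_assoc, ← mul_assoc (zassDown η N),
      ih fun k hk hkN => H k hk (by omega), one_mul, ← expPow_add N.succ_ne_zero (hcomm _),
      H (N + 1) (by omega) le_rfl, expPow_zero N.succ_ne_zero]

theorem zassDown_mul_zassUp_of_lt {η θ : ℕ → R} (hcomm : ∀ k, Commute (η k) (θ k)) {N : ℕ}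
    (hN : N ≠ 0) (H : ∀ k, 1 ≤ k → k < N → η k + θ k = 0) :
    zassDown η N * zassUp θ N = expPow N (η N + θ N) := by
  obtain ⟨M, rfl⟩ := Nat.exists_eq_succ_of_ne_zero hN
  rw [zassUp_succ, zassDown_succ, mul_assoc, ← mul_assoc (zassDown η M),
    zassDown_mul_zassUp_eq_one hcomm fun k hk hkM => H k hk (by omega), one_mul,
    expPow_add M.succ_ne_zero (hcomm _)]

end Telescoping

theorem neg_one_pow_mul_add_eq_zero_of_forall_lt {R : Type*} [Ring R] [Algebra ℚ R]
    {ζ : ℕ → R} {P : PowerSeries R}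
    (hP : ∀ n N : ℕ, n ≤ N → coeff n (zassUp ζ N * zassDown ζ N) = coeff n P)
    (hinv : negSub P * P = 1) {N : ℕ} (hN : N ≠ 0)
    (H : ∀ k, 1 ≤ k → k < N → (-1) ^ k * ζ k + ζ k = 0) :
    (-1) ^ N * ζ N + ζ N = 0 := by
  set ζ' : ℕ → R := fun k => (-1) ^ k * ζ k
  have hcomm : ∀ k, Commute (ζ' k) (ζ k) := fun k =>
    ((Commute.neg_one_left _).pow_left k).mul_left (Commute.refl _)
  have hQ : ∀ n ≤ N, coeff n (zassUp ζ' N * zassDown ζ' N * (zassUp ζ N * zassDown ζ N))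
      = coeff n (1 : PowerSeries R) := fun n hn => by
    rw [← negSub_zassUp, ← negSub_zassDown, ← negSub_mul, ← hinv]
    exact coeff_mul_eq_coeff_mul_of_le (fun n hn => by simp only [negSub, coeff_mk, hP n N hn])
      (hP · N) hn
  have hmid : zassDown ζ' N * zassUp ζ N = expPow N (ζ' N + ζ N) :=
    zassDown_mul_zassUp_of_lt hcomm hN H
  have hmid_neg : zassDown (-ζ') N * zassUp (-ζ) N = expPow N (-(ζ' N + ζ N)) := by
    have hsum : ∀ k, 1 ≤ k → k < N → (-ζ') k + (-ζ) k = 0 := fun k hk hkN => by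
      rw [Pi.neg_apply, Pi.neg_apply, ← neg_add]
      exact neg_eq_zero.mpr (H k hk hkN)
    rw [zassDown_mul_zassUp_of_lt (η := -ζ') (θ := -ζ) (fun k => (hcomm k).neg_left.neg_right)
      hN hsum, Pi.neg_apply, Pi.neg_apply, neg_add]
  have hleft : zassDown (-ζ') N * zassUp ζ' N = 1 :=
    zassDown_mul_zassUp_eq_one (fun k => (Commute.refl _).neg_left) fun k _ _ => neg_add_cancel _
  have hright : zassDown ζ N * zassUp (-ζ) N = 1 :=
    zassDown_mul_zassUp_eq_one (fun k => (Commute.refl _).neg_right) fun k _ _ => add_neg_cancel _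
  have hcoeff : coeff N (expPow N (ζ' N + ζ N)) = coeff N (expPow N (-(ζ' N + ζ N))) :=
    calc coeff N (expPow N (ζ' N + ζ N))
        = coeff N (zassDown (-ζ') N *
            (zassUp ζ' N * zassDown ζ' N * (zassUp ζ N * zassDown ζ N)) * zassUp (-ζ) N) := by
          simp only [← mul_assoc, hleft, one_mul]
          rw [mul_assoc _ (zassDown ζ N), hright, mul_one, hmid]
      _ = coeff N (zassDown (-ζ') N * 1 * zassUp (-ζ) N) :=
          coeff_mul_eq_coeff_mul_of_le
            (fun n hn => coeff_mul_eq_coeff_mul_of_le (fun _ _ => rfl) hQ hn)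
            (fun _ _ => rfl) le_rfl
      _ = coeff N (expPow N (-(ζ' N + ζ N))) := by rw [mul_one, hmid_neg]
  rw [coeff_expPow_self hN, coeff_expPow_self hN, eq_neg_iff_add_eq_zero] at hcoeff
  exact eq_zero_of_add_self_eq_zero hcoeff

theorem stmt_6_general (R : Type*) [Ring R] [Algebra ℚ R] (ζ : ℕ → R) (P : PowerSeries R)
    (hP : ∀ n N : ℕ, n ≤ N →
      PowerSeries.coeff n (zassUp ζ N * zassDown ζ N) = PowerSeries.coeff n P)
    (h1 : negSub P * P = 1) :
    ∀ m : ℕ, 1 ≤ m → ζ (2 * m) = 0 := by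
  have htwist : ∀ N, 1 ≤ N → (-1 : R) ^ N * ζ N + ζ N = 0 := by
    intro N
    induction N using Nat.strong_induction_on with
    | _ N ih =>
      exact fun hN => neg_one_pow_mul_add_eq_zero_of_forall_lt hP h1 (by omega)
        fun k hk hkN => ih k hkN hk
  intro m hm
  have h := htwist (2 * m) (by omega)
  rw [pow_mul, neg_one_sq, one_pow, one_mul] at h
  exact eq_zero_of_add_self_eq_zero h

/-- Let `P = (exp ζ₁ exp ζ₂ ⋯)(⋯ exp ζ₂ exp ζ₁)` (a coefficientwise limit of
partial products).  If the sign involution sends `P` to `P⁻¹`, then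
`ζ_{2m} = 0` for all `m ≥ 1`. -/
theorem stmt_6 (R : Type*) [Ring R] [Algebra ℚ R] (ζ : ℕ → R) (P : PowerSeries R)
    (hP : ∀ n N : ℕ, n ≤ N →
      PowerSeries.coeff n (zassUp ζ N * zassDown ζ N) = PowerSeries.coeff n P)
    (h1 : negSub P * P = 1) (h2 : P * negSub P = 1) :
    ∀ m : ℕ, 1 ≤ m → ζ (2 * m) = 0 :=
  stmt_6_general R ζ P hP h1
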